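/- Assume the u_j are pairwise distinct. Then for all x, y ∈ [0,1] and every integer k ≥ 0: (i) i(x,y) > k if and only if φ_k(x) = φ_k(y); (ii) (x ≺ y and i(x,y) ≤ k) if and only if φ_k(x) < φ_k(y). -/

import Mathlib

/-!
`i` behaves like an ultrametric: `I(x,z) ⊆ I(x,y) ∪ I(y,z)` gives
`i(x,z) ≥ min (i(x,y)) (i(y,z))`. Hence, restricted to pairs with `i ≤ k`, `≺` is a strict
weak order whose incomparability classes are the cells `{z | i(x,z) > k}`: whether `z ≺ x`
depends only on the cell of `x`, since the sign is decided by the side of `u_{i(z,x)}` on which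
`z` lies. So `φ_k` is constant on cells, and if `x ≺ y` with `i(x,y) ≤ k`, the whole cell of `x`
lies below `y` but not below `x`. As the `u_j` lie in `(0,1)`, that cell contains an interval of
positive length, so `φ_k(x) < φ_k(y)`.
-/

open MeasureTheory

/-- `I(x,y) = (min(x,y), max(x,y)]`. -/
def gapInterval (x y : ℝ) : Set ℝ := Set.Ioc (min x y) (max x y)

/-- `i(x,y) = inf { j ≥ 1 : u_j ∈ I(x,y) } ∈ ℕ ∪ {∞}` (with `inf ∅ = ∞`). -/
noncomputable def firstIdx (u : ℕ → ℝ) (x y : ℝ) : ℕ∞ :=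
  sInf ((fun j : ℕ => (j : ℕ∞)) '' {j : ℕ | 1 ≤ j ∧ u j ∈ gapInterval x y})

/-- `x ≺ y` iff `i(x,y) < ∞` and `(y − x) · s_{i(x,y)} > 0`. -/
def Prec (u s : ℕ → ℝ) (x y : ℝ) : Prop :=
  ∃ j : ℕ, firstIdx u x y = (j : ℕ∞) ∧ (y - x) * s j > 0

/-- `φ_k(x) = Leb({ y ∈ [0,1] : y ≺ x and i(x,y) ≤ k })`. -/
noncomputable def phiK (u s : ℕ → ℝ) (k : ℕ) (x : ℝ) : ℝ :=
  (volume {y : ℝ | y ∈ Set.Icc (0:ℝ) 1 ∧ Prec u s y x ∧ firstIdx u x y ≤ (k : ℕ∞)}).toReal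

open Set Filter Topology

section Gap

variable {v a b c : ℝ}

theorem mem_gapInterval_iff : v ∈ gapInterval a b ↔ (a < v ↔ ¬b < v) := by
  rw [gapInterval, mem_Ioc, min_lt_iff, le_max_iff, ← not_lt, ← not_lt]
  tauto

theorem gapInterval_comm (a b : ℝ) : gapInterval a b = gapInterval b a := by
  rw [gapInterval, gapInterval, min_comm, max_comm]

theorem gapInterval_subset_union (a b c : ℝ) :
    gapInterval a c ⊆ gapInterval a b ∪ gapInterval b c := by
  intro v
  simp only [mem_union, mem_gapInterval_iff]
  tauto

theorem mul_pos_of_mem_gapInterval (hb : v ∈ gapInterval a b) (hc : v ∈ gapInterval a c) :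
    0 < (b - a) * (c - a) := by
  rw [mem_gapInterval_iff] at hb hc
  by_cases ha : a < v
  · have := not_lt.1 (hb.1 ha); have := not_lt.1 (hc.1 ha)
    exact mul_pos (by linarith) (by linarith)
  · have := not_not.1 (mt hb.2 ha); have := not_not.1 (mt hc.2 ha)
    exact mul_pos_of_neg_of_neg (by linarith) (by linarith)

end Gap

section FirstIdx

variable {u : ℕ → ℝ} {x y z : ℝ}

theorem firstIdx_comm (u : ℕ → ℝ) (x y : ℝ) : firstIdx u x y = firstIdx u y x := by
  rw [firstIdx, firstIdx, gapInterval_comm]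

theorem firstIdx_le_of_mem {j : ℕ} (hj : 1 ≤ j) (h : u j ∈ gapInterval x y) :
    firstIdx u x y ≤ j :=
  sInf_le ⟨j, ⟨hj, h⟩, rfl⟩

theorem mem_of_firstIdx_eq {j : ℕ} (h : firstIdx u x y = j) :
    1 ≤ j ∧ u j ∈ gapInterval x y := by
  rw [firstIdx] at h
  have hS : ((fun i : ℕ => (i : ℕ∞)) '' {i : ℕ | 1 ≤ i ∧ u i ∈ gapInterval x y}).Nonempty := by
    by_contra hS
    rw [not_nonempty_iff_eq_empty.1 hS, sInf_empty] at h
    exact ENat.top_ne_natCast j h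
  obtain ⟨i, hi, hij⟩ := csInf_mem hS
  rwa [← Nat.cast_inj.1 (hij.trans h)]

theorem firstIdx_le_iff (n : ℕ) :
    firstIdx u x y ≤ n ↔ ∃ j, 1 ≤ j ∧ j ≤ n ∧ u j ∈ gapInterval x y := by
  constructor
  · intro h
    obtain ⟨j, hj⟩ := ENat.ne_top_iff_exists.1 (ne_top_of_le_ne_top (ENat.natCast_ne_top n) h)
    rw [← hj, Nat.cast_le] at h
    exact ⟨j, (mem_of_firstIdx_eq hj.symm).1, h, (mem_of_firstIdx_eq hj.symm).2⟩
  · rintro ⟨j, hj, hjn, hmem⟩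
    exact (firstIdx_le_of_mem hj hmem).trans (Nat.cast_le.2 hjn)

theorem lt_firstIdx_iff (n : ℕ) :
    n < firstIdx u x y ↔ ∀ j, 1 ≤ j → j ≤ n → u j ∉ gapInterval x y := by
  rw [← not_le, firstIdx_le_iff]
  push Not
  rfl

theorem min_firstIdx_le (u : ℕ → ℝ) (x y z : ℝ) :
    min (firstIdx u x y) (firstIdx u y z) ≤ firstIdx u x z := by
  refine le_sInf ?_
  rintro _ ⟨j, ⟨hj, hmem⟩, rfl⟩
  rcases gapInterval_subset_union x y z hmem with h | h
  · exact min_le_of_left_le (firstIdx_le_of_mem hj h)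
  · exact min_le_of_right_le (firstIdx_le_of_mem hj h)

theorem firstIdx_eq_of_lt (h : firstIdx u x y < firstIdx u y z) :
    firstIdx u x z = firstIdx u x y := by
  refine le_antisymm ?_ ((min_eq_left h.le).symm.trans_le (min_firstIdx_le u x y z))
  rcases min_le_iff.1 (min_firstIdx_le u x z y) with h' | h'
  · exact h'
  · rw [firstIdx_comm u z y] at h'
    exact absurd h' (not_le.2 h)

theorem firstIdx_eq_of_lt' (h : firstIdx u x y < firstIdx u z x) :
    firstIdx u z y = firstIdx u x y := by
  rw [firstIdx_comm u x y, firstIdx_comm u z x] at h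
  rw [firstIdx_comm, firstIdx_eq_of_lt h, firstIdx_comm]

end FirstIdx

theorem mul_pos_of_mul_pos_of_mul_pos {a b c : ℝ} (hab : 0 < a * b) (hac : 0 < a * c) :
    0 < b * c := by
  by_contra h
  have := mul_nonpos_of_nonneg_of_nonpos (sq_nonneg a) (not_lt.1 h)
  nlinarith [mul_pos hab hac]

section Prec

variable {u s : ℕ → ℝ} {x y z : ℝ}

theorem Prec.congr_right (h : Prec u s z x) (hlt : firstIdx u z x < firstIdx u x y) :
    Prec u s z y := by
  obtain ⟨m, hm, hsgn⟩ := h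
  have hzy : firstIdx u z y = m := (firstIdx_eq_of_lt hlt).trans hm
  have hside := mul_pos_of_mem_gapInterval (mem_of_firstIdx_eq hm).2 (mem_of_firstIdx_eq hzy).2
  exact ⟨m, hzy, mul_pos_of_mul_pos_of_mul_pos hside hsgn⟩

theorem Prec.congr_left (h : Prec u s x y) (hlt : firstIdx u x y < firstIdx u z x) :
    Prec u s z y := by
  obtain ⟨j, hj, hsgn⟩ := h
  have hzy : firstIdx u z y = j := (firstIdx_eq_of_lt' hlt).trans hj
  have hside := mul_pos_of_mem_gapInterval (mem_of_firstIdx_eq ((firstIdx_comm u y x).trans hj)).2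
    (mem_of_firstIdx_eq ((firstIdx_comm u y z).trans hzy)).2
  have hside' : 0 < (y - x) * (y - z) := by convert hside using 1; ring
  exact ⟨j, hzy, mul_pos_of_mul_pos_of_mul_pos hside' hsgn⟩

theorem Prec.firstIdx_ne (hzx : Prec u s z x) (hxy : Prec u s x y) :
    firstIdx u z x ≠ firstIdx u x y := by
  obtain ⟨m, hm, hsgn⟩ := hzx
  obtain ⟨j, hj, hsgn'⟩ := hxy
  intro heq
  obtain rfl : m = j := Nat.cast_inj.1 (hm.symm.trans (heq.trans hj))
  have hside := mul_pos_of_mem_gapInterval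
    (mem_of_firstIdx_eq ((firstIdx_comm u x z).trans hm)).2 (mem_of_firstIdx_eq hj).2
  have := mul_pos_of_mul_pos_of_mul_pos (mul_comm (z - x) (y - x) ▸ hside) hsgn'
  linarith

theorem prec_or_prec (hs : ∀ j, 1 ≤ j → s j ≠ 0) (h : firstIdx u x y ≠ ⊤) :
    Prec u s x y ∨ Prec u s y x := by
  obtain ⟨j, hj⟩ := ENat.ne_top_iff_exists.1 h
  obtain ⟨hj1, hmem⟩ := mem_of_firstIdx_eq hj.symm
  have hxy : y - x ≠ 0 := by
    intro hxy
    rw [sub_eq_zero.1 hxy, gapInterval, min_self, max_self, Ioc_self] at hmem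
    exact hmem
  rcases (mul_ne_zero hxy (hs j hj1)).lt_or_gt with hneg | hpos
  · exact .inr ⟨j, (firstIdx_comm u y x).trans hj.symm, by linarith⟩
  · exact .inl ⟨j, hj.symm, hpos⟩

end Prec

def PrecK (u s : ℕ → ℝ) (k : ℕ) (x y : ℝ) : Prop :=
  Prec u s x y ∧ firstIdx u x y ≤ k

section PrecK

variable {u s : ℕ → ℝ} {k : ℕ} {x y z : ℝ}

theorem PrecK.trans (hzx : PrecK u s k z x) (hxy : PrecK u s k x y) : PrecK u s k z y := by
  rcases lt_trichotomy (firstIdx u z x) (firstIdx u x y) with hlt | heq | hgt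
  · exact ⟨hzx.1.congr_right hlt, (firstIdx_eq_of_lt hlt).trans_le hzx.2⟩
  · exact absurd heq (hzx.1.firstIdx_ne hxy.1)
  · exact ⟨hxy.1.congr_left hgt, (firstIdx_eq_of_lt' hgt).trans_le hxy.2⟩

theorem PrecK.congr_right_of_lt (h : PrecK u s k z x) (hxy : k < firstIdx u x y) :
    PrecK u s k z y :=
  have hlt := h.2.trans_lt hxy
  ⟨h.1.congr_right hlt, (firstIdx_eq_of_lt hlt).trans_le h.2⟩

theorem PrecK.congr_left_of_lt (h : PrecK u s k x y) (hzx : k < firstIdx u z x) :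
    PrecK u s k z y := by
  have hlt := h.2.trans_lt hzx
  exact ⟨h.1.congr_left hlt, (firstIdx_eq_of_lt' hlt).trans_le h.2⟩

theorem precK_or_precK (hs : ∀ j, 1 ≤ j → s j ≠ 0) (h : firstIdx u x y ≤ k) :
    PrecK u s k x y ∨ PrecK u s k y x :=
  (prec_or_prec hs (ne_top_of_le_ne_top (ENat.natCast_ne_top k) h)).imp
    (fun hxy => ⟨hxy, h⟩) (fun hyx => ⟨hyx, firstIdx_comm u y x ▸ h⟩)

end PrecK

theorem eventually_not_mem_gapInterval_nhdsGT (v x : ℝ) :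
    ∀ᶠ z in 𝓝[>] x, v ∉ gapInterval x z := by
  rcases le_or_gt v x with hv | hv
  · filter_upwards [self_mem_nhdsWithin] with z hz
    rw [gapInterval, min_eq_left (le_of_lt hz)]
    exact fun h => h.1.not_ge hv
  · filter_upwards [nhdsWithin_le_nhds (Iio_mem_nhds hv)] with z hz
    exact fun h => (h.2.trans_lt (max_lt hv hz)).false

theorem eventually_not_mem_gapInterval_nhdsLT {v x : ℝ} (hv : v < x) :
    ∀ᶠ z in 𝓝[<] x, v ∉ gapInterval x z := by
  filter_upwards [nhdsWithin_le_nhds (Ioi_mem_nhds hv)] with z hz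
  exact fun h => (h.1.trans_le' (le_min hv.le hz.le)).false

theorem exists_Ioo_subset_lt_firstIdx {u : ℕ → ℝ} (hu : ∀ j, 1 ≤ j → u j < 1) (k : ℕ) {x : ℝ}
    (hx : x ∈ Icc (0 : ℝ) 1) :
    ∃ a b, a < b ∧ Ioo a b ⊆ {z | z ∈ Icc (0 : ℝ) 1 ∧ (k : ℕ∞) < firstIdx u z x} := by
  suffices ∃ a b, a < b ∧
      Ioo a b ⊆ {z | z ∈ Icc (0 : ℝ) 1 ∧ ∀ j ∈ Finset.Icc 1 k, u j ∉ gapInterval x z} by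
    obtain ⟨a, b, hab, hsub⟩ := this
    refine ⟨a, b, hab, fun z hz => ⟨(hsub hz).1, ?_⟩⟩
    rw [firstIdx_comm, lt_firstIdx_iff]
    exact fun j hj hjk => (hsub hz).2 j (Finset.mem_Icc.2 ⟨hj, hjk⟩)
  rcases hx.2.lt_or_eq with hx1 | rfl
  · have hev := inter_mem (Icc_mem_nhdsGT_of_mem ⟨hx.1, hx1⟩)
      ((Finset.Icc 1 k).eventually_all.2 fun j _ => eventually_not_mem_gapInterval_nhdsGT (u j) x)
    obtain ⟨b, hb, hsub⟩ := mem_nhdsGT_iff_exists_Ioo_subset.1 hev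
    exact ⟨x, b, hb, hsub⟩
  · have hev := inter_mem (Icc_mem_nhdsLT_of_mem ⟨zero_lt_one, le_rfl⟩)
      ((Finset.Icc 1 k).eventually_all.2 fun j hj =>
        eventually_not_mem_gapInterval_nhdsLT (hu j (Finset.mem_Icc.1 hj).1))
    obtain ⟨a, ha, hsub⟩ := mem_nhdsLT_iff_exists_Ioo_subset.1 hev
    exact ⟨a, 1, ha, hsub⟩

section PhiK

variable {u s : ℕ → ℝ} {k : ℕ} {x y : ℝ}

theorem phiK_eq_toReal_volume (u s : ℕ → ℝ) (k : ℕ) (x : ℝ) :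
    phiK u s k x = (volume {z | z ∈ Icc (0 : ℝ) 1 ∧ PrecK u s k z x}).toReal := by
  simp only [phiK, PrecK, firstIdx_comm u x]

theorem phiK_eq_of_lt_firstIdx (h : k < firstIdx u x y) : phiK u s k x = phiK u s k y := by
  have h' : k < firstIdx u y x := firstIdx_comm u x y ▸ h
  simp only [phiK_eq_toReal_volume]
  congr 3
  ext z
  exact and_congr_right fun _ =>
    ⟨fun hz => hz.congr_right_of_lt h, fun hz => hz.congr_right_of_lt h'⟩

theorem phiK_lt_of_precK (hu : ∀ j, 1 ≤ j → u j < 1) (hx : x ∈ Icc (0 : ℝ) 1)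
    (h : PrecK u s k x y) : phiK u s k x < phiK u s k y := by
  obtain ⟨a, b, hab, hcell⟩ := exists_Ioo_subset_lt_firstIdx hu k hx
  set A := {z | z ∈ Icc (0 : ℝ) 1 ∧ PrecK u s k z x}
  set B := {z | z ∈ Icc (0 : ℝ) 1 ∧ PrecK u s k z y}
  have hB : volume B ≠ ⊤ :=
    ne_top_of_le_ne_top (by simp) (measure_mono fun z (hz : z ∈ B) => hz.1)
  have hsub : A ∪ Ioo a b ⊆ B := by
    rintro z (⟨hz, hzx⟩ | hz)
    · exact ⟨hz, hzx.trans h⟩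
    · exact ⟨(hcell hz).1, h.congr_left_of_lt (hcell hz).2⟩
  have hA : volume A ≠ ⊤ := measure_ne_top_of_subset (subset_union_left.trans hsub) hB
  have hdisj : Disjoint A (Ioo a b) :=
    disjoint_left.2 fun z hzA hz => (hzA.2.2.trans_lt (hcell hz).2).false
  rw [phiK_eq_toReal_volume, phiK_eq_toReal_volume,
    ENNReal.toReal_lt_toReal hA hB]
  calc volume A < volume A + volume (Ioo a b) :=
        ENNReal.lt_add_right hA (by simp [hab])
    _ = volume (A ∪ Ioo a b) := (measure_union hdisj measurableSet_Ioo).symm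
    _ ≤ volume B := measure_mono hsub

end PhiK

theorem phiK_characterizes_firstIdx_and_prec_general
    (u s : ℕ → ℝ)
    (hu : ∀ j, 1 ≤ j → u j ∈ Set.Ioo (0:ℝ) 1)
    (hs : ∀ j, 1 ≤ j → s j = 1 ∨ s j = -1)
    (x y : ℝ) (hx : x ∈ Set.Icc (0:ℝ) 1) (hy : y ∈ Set.Icc (0:ℝ) 1) (k : ℕ) :
    (((k : ℕ∞) < firstIdx u x y) ↔ phiK u s k x = phiK u s k y) ∧
    ((Prec u s x y ∧ firstIdx u x y ≤ (k : ℕ∞)) ↔ phiK u s k x < phiK u s k y) := by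
  have hu' : ∀ j, 1 ≤ j → u j < 1 := fun j hj => (hu j hj).2
  have hs' : ∀ j, 1 ≤ j → s j ≠ 0 := fun j hj => by rcases hs j hj with h | h <;> simp [h]
  have hlt : PrecK u s k x y → phiK u s k x < phiK u s k y := phiK_lt_of_precK hu' hx
  have hgt : PrecK u s k y x → phiK u s k y < phiK u s k x := phiK_lt_of_precK hu' hy
  have htot : firstIdx u x y ≤ k → PrecK u s k x y ∨ PrecK u s k y x := precK_or_precK hs'
  refine ⟨⟨phiK_eq_of_lt_firstIdx, fun heq => ?_⟩, ⟨hlt, fun hphi => ?_⟩⟩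
  · by_contra hle
    rcases htot (not_lt.1 hle) with h | h
    · exact (hlt h).ne heq
    · exact (hgt h).ne' heq
  · rcases le_or_gt (firstIdx u x y) k with hle | hk
    · exact (htot hle).resolve_right fun h => (hgt h).not_gt hphi
    · exact absurd (phiK_eq_of_lt_firstIdx hk) hphi.ne

/-- if the `u_j` are pairwise distinct, then for all `x, y ∈ [0,1]` and `k ≥ 0`:
(i) `i(x,y) > k ↔ φ_k(x) = φ_k(y)`; (ii) `(x ≺ y ∧ i(x,y) ≤ k) ↔ φ_k(x) < φ_k(y)`. -/
theorem phiK_characterizes_firstIdx_and_prec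
    (u s : ℕ → ℝ)
    (hu : ∀ j, 1 ≤ j → u j ∈ Set.Ioo (0:ℝ) 1)
    (hs : ∀ j, 1 ≤ j → s j = 1 ∨ s j = -1)
    (hdist : ∀ j k, 1 ≤ j → 1 ≤ k → u j = u k → j = k)
    (x y : ℝ) (hx : x ∈ Set.Icc (0:ℝ) 1) (hy : y ∈ Set.Icc (0:ℝ) 1) (k : ℕ) :
    (((k : ℕ∞) < firstIdx u x y) ↔ phiK u s k x = phiK u s k y) ∧
    ((Prec u s x y ∧ firstIdx u x y ≤ (k : ℕ∞)) ↔ phiK u s k x < phiK u s k y) :=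
  phiK_characterizes_firstIdx_and_prec_general u s hu hs x y hx hy k
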